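/- arXiv:1510.03483 — 4 statements merged into one kernel-verified Lean document; each statement's English description precedes it below -/
import Mathlib

section
/- Let W be an n-dimensional vector space with basis e_1,...,e_n, and on the exterior algebra Λ*W define E = contraction with l_E and F = wedge with l_F, where l_E = Σ_j (-1)^{p(λ_{<j})} q^{-λ_{>j}} e_j and l_F = Σ_j (-1)^{p(λ_{<j})} q^{λ_{<j}} [λ_j]_q e_j. Then EF + FE = [λ_1 + ... + λ_n]_q · id on Λ*W. -/
set_option synthInstance.maxHeartbeats 1000000
set_option maxHeartbeats 1000000

noncomputable section

abbrev Rq : Type := RatFunc ℂ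
abbrev qq : Rq := RatFunc.X

/-- `⟨h₁+h₂, μ⟩` for an integral weight `μ = (μ₁, μ₂)`. -/
def wval (w : ℤ × ℤ) : ℤ := w.1 + w.2

/-- Parity of a weight: the coefficient of `ε₂`. -/
def wpar (w : ℤ × ℤ) : ℤ := w.2

/-- The quantum integer `[m]_q = (q^m - q^{-m})/(q - q⁻¹)`. -/
def qint (m : ℤ) : Rq := (qq ^ m - qq ^ (-m)) / (qq - qq⁻¹)

/-! The anticommutation relations collapse `EF + FE` to the scalar `Σⱼ aⱼ bⱼ · id`, where `aⱼ`
and `bⱼ` are the coefficients of `l_E` and `l_F`. The signs square away, leaving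
`Σⱼ q^(λ_{<j} - λ_{>j}) [λⱼ]_q`, which is `[λ₁ + ⋯ + λₙ]_q` by induction on `n`, peeling off the
last weight with `[a + b]_q = q^(-b) [a]_q + q^a [b]_q`. -/

open Finset

section FinFilterSums
variable {M : Type*} [AddCommMonoid M] {n : ℕ} (w : Fin (n + 1) → M)

theorem Fin.sum_filter_lt_castSucc (k : Fin n) :
    ∑ i ∈ univ.filter (· < k.castSucc), w i = ∑ i ∈ univ.filter (· < k), w i.castSucc := by
  simp [sum_filter, Fin.sum_univ_castSucc, (Fin.castSucc_lt_last _).not_gt]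

theorem Fin.sum_filter_castSucc_lt (k : Fin n) :
    ∑ i ∈ univ.filter (k.castSucc < ·), w i =
      ∑ i ∈ univ.filter (k < ·), w i.castSucc + w (Fin.last n) := by
  simp [sum_filter, Fin.sum_univ_castSucc]

theorem Fin.sum_filter_lt_last :
    ∑ i ∈ univ.filter (· < Fin.last n), w i = ∑ i : Fin n, w i.castSucc := by
  simp [sum_filter, Fin.sum_univ_castSucc]

theorem Fin.sum_filter_last_lt : ∑ i ∈ univ.filter (Fin.last n < ·), w i = 0 := by
  simp [sum_filter, Fin.sum_univ_castSucc, (Fin.castSucc_lt_last _).not_gt]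

end FinFilterSums

theorem sum_smul_mul_sum_smul_add_of_anticomm {R A ι : Type*} [CommSemiring R] [Semiring A]
    [Algebra R A] [Fintype ι] [DecidableEq ι] (c f : ι → A)
    (h : ∀ i j, c i * f j + f j * c i = if i = j then 1 else 0) (a b : ι → R) :
    (∑ i, a i • c i) * (∑ j, b j • f j) + (∑ j, b j • f j) * (∑ i, a i • c i) =
      (∑ i, a i * b i) • 1 := by
  rw [sum_mul_sum, mul_sum, ← sum_add_distrib, sum_smul]
  refine sum_congr rfl fun i _ => ?_
  rw [sum_mul, ← sum_add_distrib]
  simp_rw [smul_mul_smul_comm, mul_comm (b _) (a i), ← smul_add, h, smul_ite, smul_zero,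
    sum_ite_eq, if_pos (mem_univ i)]

theorem qq_ne_zero : (qq : Rq) ≠ 0 := RatFunc.X_ne_zero

theorem qint_zero : qint 0 = 0 := by simp [qint]

theorem qint_add (a b : ℤ) : qint (a + b) = qq ^ (-b) * qint a + qq ^ a * qint b := by
  simp only [qint, div_eq_mul_inv, zpow_add₀ qq_ne_zero, zpow_neg]
  ring

theorem sum_zpow_mul_qint {n : ℕ} (w : Fin n → ℤ) :
    ∑ j, qq ^ (∑ i ∈ univ.filter (· < j), w i - ∑ i ∈ univ.filter (j < ·), w i) * qint (w j) =
      qint (∑ j, w j) := by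
  induction n with
  | zero => simp [qint_zero]
  | succ n ih =>
    rw [Fin.sum_univ_castSucc, Fin.sum_univ_castSucc w, qint_add, ← ih, mul_sum]
    simp only [Fin.sum_filter_lt_castSucc, Fin.sum_filter_castSucc_lt, Fin.sum_filter_lt_last,
      Fin.sum_filter_last_lt, sub_zero]
    congr 1
    refine sum_congr rfl fun k _ => ?_
    rw [← mul_assoc, ← zpow_add₀ qq_ne_zero]
    ring_nf

/-- Let `W` be an `n`-dimensional space with basis `e₁, …, eₙ` and
let `Λ` be its exterior algebra, abstracted here via operators
`wedge v = (v ∧ ·)` and `ctr v = (v ⌟ ·)` satisfying the canonical anticommutation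
relation `(eᵢ ⌟)(eⱼ ∧) + (eⱼ ∧)(eᵢ ⌟) = δᵢⱼ id`.  With
`l_E = Σⱼ (-1)^{p(λ_{<j})} q^{-λ_{>j}} eⱼ` and
`l_F = Σⱼ (-1)^{p(λ_{<j})} q^{λ_{<j}} [λⱼ]_q eⱼ`, the operators `E = l_E ⌟` and
`F = l_F ∧` satisfy `EF + FE = [λ₁ + ⋯ + λₙ]_q · id`. -/
theorem stmt4 {n : ℕ} (wt : Fin n → ℤ × ℤ)
    {W Λ : Type*} [AddCommGroup W] [Module Rq W] [AddCommGroup Λ] [Module Rq Λ]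
    (e : Fin n → W)
    (wedge ctr : W →ₗ[Rq] Module.End Rq Λ)
    (hcomm : ∀ i j : Fin n,
      ctr (e i) * wedge (e j) + wedge (e j) * ctr (e i) =
        if i = j then 1 else 0) :
    let psumLt : Fin n → ℤ := fun j => ∑ i ∈ Finset.univ.filter (· < j), wpar (wt i)
    let vsumLt : Fin n → ℤ := fun j => ∑ i ∈ Finset.univ.filter (· < j), wval (wt i)
    let vsumGt : Fin n → ℤ := fun j => ∑ i ∈ Finset.univ.filter (j < ·), wval (wt i)
    let lE : W := ∑ j, (((-1 : Rq) ^ psumLt j) * qq ^ (-(vsumGt j))) • e j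
    let lF : W := ∑ j, (((-1 : Rq) ^ psumLt j) * qq ^ (vsumLt j) * qint (wval (wt j))) • e j
    ctr lE * wedge lF + wedge lF * ctr lE =
      qint (∑ j, wval (wt j)) • (1 : Module.End Rq Λ) := by
  intro psumLt vsumLt vsumGt lE lF
  simp only [lE, lF, map_sum, map_smul]
  rw [sum_smul_mul_sum_smul_add_of_anticomm _ _ hcomm, ← sum_zpow_mul_qint]
  congr 1
  refine sum_congr rfl fun j _ => ?_
  have hsign : ((-1 : Rq) ^ psumLt j) * (-1) ^ psumLt j = 1 := by
    rw [← mul_zpow, neg_one_mul, neg_neg, one_zpow]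
  calc _ = ((-1 : Rq) ^ psumLt j * (-1) ^ psumLt j) * (qq ^ (-vsumGt j) * qq ^ vsumLt j) *
        qint (wval (wt j)) := by ring
    _ = _ := by rw [hsign, one_mul, ← zpow_add₀ qq_ne_zero, neg_add_eq_sub]

end
end

section
/- With notation as in the exterior algebra model, the vectors l_i = -(-1)^{p(λ_i)} e_i + q^{-λ_{i+1}} e_{i+1} for i = 1,...,n-1 satisfy E(l_i) = 0, i.e., each l_i is annihilated by the contraction operator l_E ⌟. -/
set_option synthInstance.maxHeartbeats 1000000
set_option maxHeartbeats 1000000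

noncomputable section

lemma key {n : ℕ} (c : Fin n → Rq) (a b : Fin n) (x y : Rq) :
    (∑ j, c j • (LinearMap.proj j : (Fin n → Rq) →ₗ[Rq] Rq))
      (x • (Pi.single a 1 : Fin n → Rq) + y • (Pi.single b 1 : Fin n → Rq)) = c a * x + c b * y := by
  simp only [LinearMap.sum_apply, LinearMap.smul_apply, map_add, map_smul,
    LinearMap.proj_apply, Pi.single_apply, smul_eq_mul, mul_ite, mul_one, mul_zero, mul_add]
  rw [Finset.sum_ite_eq', Finset.sum_ite_eq']
  simp [mul_comm]

lemma proj_single {n : ℕ} (a x : Fin n) :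
    (LinearMap.proj x : (Fin n → Rq) →ₗ[Rq] Rq) (Pi.single a 1) = if x = a then 1 else 0 := by
  simp [Pi.single_apply]

/-- In the exterior algebra model `Λ*W` with `W` of dimension
`m + 1` (so `n = m + 1` strands) and weight sequence `λ`, the vectors
`lᵢ = -(-1)^{p(λᵢ)} eᵢ + q^{-λ_{i+1}} e_{i+1}` (for `i = 1, …, n-1`) are annihilated
by `E = l_E ⌟`, the contraction against
`l_E = Σⱼ (-1)^{p(λ_{<j})} q^{-λ_{>j}} eⱼ`. -/
theorem stmt5 {m : ℕ} (wt : Fin (m + 1) → ℤ × ℤ) :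
    let M : Type := Fin (m + 1) → Rq
    let e : Fin (m + 1) → M := fun j => Pi.single j 1
    let psumLt : Fin (m + 1) → ℤ := fun j => ∑ i ∈ Finset.univ.filter (· < j), wpar (wt i)
    let vsumGt : Fin (m + 1) → ℤ := fun j => ∑ i ∈ Finset.univ.filter (j < ·), wval (wt i)
    -- the dual vector `⟨l_E, -⟩`, implementing contraction by `l_E`
    let phiE : Module.Dual Rq M :=
      ∑ j, (((-1 : Rq) ^ psumLt j) * qq ^ (-(vsumGt j))) • LinearMap.proj j
    let lvec : Fin m → M := fun i =>
      (-((-1 : Rq) ^ wpar (wt i.castSucc))) • e i.castSucc +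
        (qq ^ (-(wval (wt i.succ)))) • e i.succ
    ∀ i : Fin m,
      CliffordAlgebra.contractLeft (Q := (0 : QuadraticForm Rq M)) phiE
        (ExteriorAlgebra.ι Rq (lvec i)) = 0 := by
  intro M e psumLt vsumGt phiE lvec i
  rw [show ExteriorAlgebra.ι Rq (lvec i) = CliffordAlgebra.ι (0 : QuadraticForm Rq M) (lvec i) from rfl,
    CliffordAlgebra.contractLeft_ι]
  suffices h : phiE (lvec i) = 0 by rw [h, map_zero]
  have hk : phiE (lvec i) =
      ((-1 : Rq) ^ psumLt i.castSucc * qq ^ (-(vsumGt i.castSucc))) *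
        (-((-1 : Rq) ^ wpar (wt i.castSucc))) +
      ((-1 : Rq) ^ psumLt i.succ * qq ^ (-(vsumGt i.succ))) * (qq ^ (-(wval (wt i.succ)))) :=
    key (fun j => (-1 : Rq) ^ psumLt j * qq ^ (-(vsumGt j))) i.castSucc i.succ _ _
  rw [hk]
  have h1 : psumLt i.succ = wpar (wt i.castSucc) + psumLt i.castSucc := by
    have : (Finset.univ.filter (· < (i.succ : Fin (m+1)))) =
        insert i.castSucc (Finset.univ.filter (· < (i.castSucc : Fin (m+1)))) := by
      ext x
      simp only [Finset.mem_filter, Finset.mem_univ, true_and, Finset.mem_insert,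
        Fin.lt_def, Fin.val_succ, Fin.coe_castSucc, Fin.ext_iff]
      omega
    simp only [psumLt, this]
    rw [Finset.sum_insert (by simp)]
  have h2 : vsumGt i.castSucc = wval (wt i.succ) + vsumGt i.succ := by
    have : (Finset.univ.filter ((i.castSucc : Fin (m+1)) < ·)) =
        insert i.succ (Finset.univ.filter ((i.succ : Fin (m+1)) < ·)) := by
      ext x
      simp only [Finset.mem_filter, Finset.mem_univ, true_and, Finset.mem_insert,
        Fin.lt_def, Fin.val_succ, Fin.coe_castSucc, Fin.ext_iff]
      omega
    simp only [vsumGt, this]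
    rw [Finset.sum_insert (by simp)]
  rw [h1, h2]
  have hq : (qq : Rq) ≠ 0 := RatFunc.X_ne_zero
  have hn : (-1 : Rq) ≠ 0 := by norm_num
  rw [neg_add, zpow_add₀ hq, zpow_add₀ hn]
  ring

end
end

section
/- The set {l_I : I ⊆ {1,...,n-1}}, where l_I = l_{i_1} ∧ ... ∧ l_{i_k} for I = {i_1 < ... < i_k}, is a basis for the space of highest weight vectors (kernel of E) in Λ*W ≅ L(λ_1) ⊗ ... ⊗ L(λ_n); in particular this kernel has dimension 2^{n-1}. -/
/-!
Replace the standard basis of `W` by `u₁ = e₁`, `u_{i+1} = l_i` (`1 ≤ i ≤ n-1`); this is a basis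
because `l_i` is a combination of `e_i` and `e_{i+1}` with a nonzero coefficient on `e_{i+1}`.
The functional `l_E` vanishes on every `l_i` but not on `e₁`. In the basis of `Λ*W` formed by the
ordered wedges `u_S`, the contraction `E` therefore kills `u_S` when `1 ∉ S` and sends `u₁ ∧ u_S`
to `l_E(u₁) u_S`. Since `E(u₁ ∧ x) = l_E(u₁) x` for `x ∈ ker E`, the kernel lies in the image of
`E`, which is spanned by the `u_S` with `1 ∉ S`; these are exactly the `l_I`, and they lie in
`ker E`.
-/

noncomputable section

open CliffordAlgebra Module

theorem Fin.range_map_succEmb (n : ℕ) :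
    Set.range (fun T : Finset (Fin n) => T.map (Fin.succEmb n)) = {S | 0 ∉ S} := by
  ext S
  have h := Finset.subset_map_iff (f := Fin.succEmb n) (s := S) (t := Finset.univ)
  simp only [Finset.subset_univ, true_and, ← Fin.Ioi_zero_eq_map] at h
  simp only [Set.mem_range, Set.mem_ofPred_eq, eq_comm (b := S), ← h]
  refine ⟨fun hS h0 => by simpa using hS h0, fun hS i hi => ?_⟩
  exact Finset.mem_Ioi.mpr (Fin.pos_iff_ne_zero.mpr (ne_of_mem_of_not_mem hi hS))

theorem Fin.sum_filter_lt_succ {β : Type*} [AddCommMonoid β] {n : ℕ} (f : Fin (n + 1) → β)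
    (i : Fin n) :
    ∑ j ∈ Finset.univ.filter (· < i.succ), f j =
      f i.castSucc + ∑ j ∈ Finset.univ.filter (· < i.castSucc), f j := by
  have : Finset.univ.filter (· < i.succ) =
      insert i.castSucc (Finset.univ.filter (· < i.castSucc)) := by
    ext j
    simp only [Finset.mem_filter, Finset.mem_insert, Finset.mem_univ, true_and, Fin.lt_def,
      Fin.val_succ, Fin.val_castSucc, Fin.ext_iff]
    omega
  rw [this, Finset.sum_insert (by simp)]

theorem Fin.sum_filter_castSucc_lt_s6 {β : Type*} [AddCommMonoid β] {n : ℕ} (f : Fin (n + 1) → β)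
    (i : Fin n) :
    ∑ j ∈ Finset.univ.filter (i.castSucc < ·), f j =
      f i.succ + ∑ j ∈ Finset.univ.filter (i.succ < ·), f j := by
  have : Finset.univ.filter (i.castSucc < ·) =
      insert i.succ (Finset.univ.filter (i.succ < ·)) := by
    ext j
    simp only [Finset.mem_filter, Finset.mem_insert, Finset.mem_univ, true_and, Fin.lt_def,
      Fin.val_succ, Fin.val_castSucc, Fin.ext_iff]
    omega
  rw [this, Finset.sum_insert (by simp)]

section CommRing

variable {R M : Type*} [CommRing R] [AddCommGroup M] [Module R M]

theorem contractLeft_prod_map_ι_eq_zero (φ : Dual R M) (l : List M) (hl : ∀ v ∈ l, φ v = 0) :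
    contractLeft (Q := (0 : QuadraticForm R M)) φ (l.map (ExteriorAlgebra.ι R)).prod = 0 := by
  induction l with
  | nil => simp
  | cons v l ih =>
    rw [List.map_cons, List.prod_cons, contractLeft_ι_mul, hl v List.mem_cons_self,
      ih fun w hw => hl w (List.mem_cons_of_mem v hw)]
    simp

theorem ExteriorAlgebra.basis_apply_eq_prod_sort {I : Type*} [LinearOrder I]
    (b : Basis I R M) (s : Finset I) :
    b.ExteriorAlgebra s = ((s.sort.map b).map (ι R)).prod := by
  rw [basis_apply_ofCard b rfl, ExteriorAlgebra.ιMulti_family, ιMulti_apply, List.ofFn_eq_map,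
    ← s.listMap_orderEmbOfFin_finRange rfl, List.map_map, List.map_map]
  rfl

theorem ExteriorAlgebra.basis_insert_bot {I : Type*} [LinearOrder I] [OrderBot I]
    (b : Basis I R M) {S : Finset I} (hS : ⊥ ∉ S) :
    b.ExteriorAlgebra (insert ⊥ S) = ι R (b ⊥) * b.ExteriorAlgebra S := by
  rw [basis_apply_eq_prod_sort, basis_apply_eq_prod_sort,
    Finset.sort_insert _ (fun i _ => bot_le) hS]
  simp

end CommRing

section Field

variable {K M : Type*} [Field K] [AddCommGroup M] [Module K M]

theorem top_le_span_range_cons_of_bidiagonal {n : ℕ} (b : Basis (Fin (n + 1)) K M)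
    {l : Fin n → M} (a c : Fin n → K) (hc : ∀ i, c i ≠ 0)
    (hl : ∀ i, l i = a i • b i.castSucc + c i • b i.succ) :
    ⊤ ≤ Submodule.span K (Set.range (Fin.cons (b 0) l : Fin (n + 1) → M)) := by
  rw [← b.span_eq, Submodule.span_le, Set.range_subset_iff]
  intro j
  induction j using Fin.induction with
  | zero => exact Submodule.subset_span ⟨0, rfl⟩
  | succ i ih =>
    have hb : b i.succ = (c i)⁻¹ • (l i - a i • b i.castSucc) := by
      rw [hl, add_sub_cancel_left, smul_smul, inv_mul_cancel₀ (hc i), one_smul]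
    rw [hb]
    exact Submodule.smul_mem _ _ (Submodule.sub_mem _ (Submodule.subset_span ⟨i.succ, rfl⟩)
      (Submodule.smul_mem _ _ ih))

theorem ker_contractLeft_le_range (φ : Dual K M) {v : M} (hv : φ v ≠ 0) :
    LinearMap.ker (contractLeft (Q := (0 : QuadraticForm K M)) φ) ≤
      LinearMap.range (contractLeft (Q := (0 : QuadraticForm K M)) φ) := by
  intro x hx
  refine ⟨(φ v)⁻¹ • (ExteriorAlgebra.ι K v * x), ?_⟩
  rw [map_smul, contractLeft_ι_mul, LinearMap.mem_ker.mp hx, mul_zero, sub_zero, smul_smul,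
    inv_mul_cancel₀ hv, one_smul]

variable {I : Type*} [LinearOrder I] [OrderBot I] (b : Basis I K M) {φ : Dual K M}

theorem contractLeft_basis_of_bot_notMem (hφ : ∀ i ≠ ⊥, φ (b i) = 0)
    {S : Finset I} (hS : ⊥ ∉ S) :
    contractLeft (Q := (0 : QuadraticForm K M)) φ (b.ExteriorAlgebra S) = 0 := by
  rw [ExteriorAlgebra.basis_apply_eq_prod_sort]
  refine contractLeft_prod_map_ι_eq_zero φ _ ?_
  simp only [List.mem_map, Finset.mem_sort]
  rintro _ ⟨i, hi, rfl⟩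
  exact hφ i (ne_of_mem_of_not_mem hi hS)

theorem contractLeft_basis_insert_bot (hφ : ∀ i ≠ ⊥, φ (b i) = 0)
    {S : Finset I} (hS : ⊥ ∉ S) :
    contractLeft (Q := (0 : QuadraticForm K M)) φ (b.ExteriorAlgebra (insert ⊥ S)) =
      φ (b ⊥) • b.ExteriorAlgebra S := by
  rw [ExteriorAlgebra.basis_insert_bot b hS, contractLeft_ι_mul,
    contractLeft_basis_of_bot_notMem b hφ hS, mul_zero, sub_zero, Algebra.smul_def]

theorem ker_contractLeft_eq_span_basis (hφbot : φ (b ⊥) ≠ 0) (hφ : ∀ i ≠ ⊥, φ (b i) = 0) :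
    LinearMap.ker (contractLeft (Q := (0 : QuadraticForm K M)) φ) =
      Submodule.span K (b.ExteriorAlgebra '' {S | ⊥ ∉ S}) := by
  refine le_antisymm ((ker_contractLeft_le_range φ hφbot).trans ?_) ?_
  · rw [LinearMap.range_eq_map, ← b.ExteriorAlgebra.span_eq, Submodule.map_span,
      Submodule.span_le]
    rintro _ ⟨_, ⟨S, rfl⟩, rfl⟩
    by_cases hS : ⊥ ∈ S
    · have hS' : ⊥ ∉ S.erase ⊥ := Finset.notMem_erase ⊥ S
      rw [← Finset.insert_erase hS, contractLeft_basis_insert_bot b hφ hS']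
      exact Submodule.smul_mem _ _ (Submodule.subset_span ⟨_, hS', rfl⟩)
    · rw [contractLeft_basis_of_bot_notMem b hφ hS]
      exact Submodule.zero_mem _
  · rw [Submodule.span_le]
    rintro _ ⟨S, hS, rfl⟩
    exact contractLeft_basis_of_bot_notMem b hφ hS

theorem exists_basis_ker_contractLeft (hφbot : φ (b ⊥) ≠ 0) (hφ : ∀ i ≠ ⊥, φ (b i) = 0)
    {J : Type*} {s : J → Finset I} (hs : Function.Injective s)
    (hrange : Set.range s = {S | ⊥ ∉ S}) :
    ∃ B : Basis J K (LinearMap.ker (contractLeft (Q := (0 : QuadraticForm K M)) φ)),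
      ∀ j, (B j : ExteriorAlgebra K M) = b.ExteriorAlgebra (s j) := by
  have hli : LinearIndependent K (b.ExteriorAlgebra ∘ s) :=
    b.ExteriorAlgebra.linearIndependent.comp s hs
  have hspan : Submodule.span K (Set.range (b.ExteriorAlgebra ∘ s)) =
      LinearMap.ker (contractLeft (Q := (0 : QuadraticForm K M)) φ) := by
    rw [ker_contractLeft_eq_span_basis b hφbot hφ, Set.range_comp, hrange]
  exact ⟨(Basis.span hli).map (LinearEquiv.ofEq _ _ hspan), fun j => by simp [Basis.span_apply]⟩

end Field

theorem exists_basis_ker_contractLeft_of_fin {K M : Type*} [Field K] [AddCommGroup M]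
    [Module K M] {n : ℕ} (b : Basis (Fin (n + 1)) K M) {φ : Dual K M} (h0 : φ (b 0) ≠ 0)
    (hsucc : ∀ i : Fin n, φ (b i.succ) = 0) :
    ∃ B : Basis (Finset (Fin n)) K (LinearMap.ker (contractLeft (Q := (0 : QuadraticForm K M)) φ)),
      ∀ I, (B I : ExteriorAlgebra K M) =
        ((I.sort.map fun i : Fin n => b i.succ).map (ExteriorAlgebra.ι K)).prod := by
  obtain ⟨B, hB⟩ := exists_basis_ker_contractLeft b h0
    (fun i hi => by obtain ⟨i, rfl⟩ := Fin.exists_succ_eq.mpr hi; exact hsucc i)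
    (Finset.map_injective (Fin.succEmb n)) (Fin.range_map_succEmb n)
  refine ⟨B, fun I => ?_⟩
  rw [hB, ExteriorAlgebra.basis_apply_eq_prod_sort,
    ← StrictMonoOn.map_finsetSort (Fin.succEmb n) I (Fin.strictMono_succ.strictMonoOn _),
    List.map_map, List.map_map, List.map_map]
  rfl

/-- In the exterior algebra model on `W ≅ L(λ₁) ⊗ ⋯ ⊗ L(λₙ)`
(`n = m + 1`, `dim W = n`), the wedges `l_I = l_{i₁} ∧ ⋯ ∧ l_{i_k}` over subsets
`I ⊆ {1, …, n-1}` form a basis of the space of highest weight vectors, i.e. of the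
kernel of `E = l_E ⌟`; in particular this kernel has dimension `2^{n-1}`. -/
theorem stmt6 {m : ℕ} (wt : Fin (m + 1) → ℤ × ℤ) :
    let M : Type := Fin (m + 1) → Rq
    let e : Fin (m + 1) → M := fun j => Pi.single j 1
    let psumLt : Fin (m + 1) → ℤ := fun j => ∑ i ∈ Finset.univ.filter (· < j), wpar (wt i)
    let vsumGt : Fin (m + 1) → ℤ := fun j => ∑ i ∈ Finset.univ.filter (j < ·), wval (wt i)
    let phiE : Module.Dual Rq M :=
      ∑ j, (((-1 : Rq) ^ psumLt j) * qq ^ (-(vsumGt j))) • LinearMap.proj j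
    let E : ExteriorAlgebra Rq M →ₗ[Rq] ExteriorAlgebra Rq M :=
      CliffordAlgebra.contractLeft (Q := (0 : QuadraticForm Rq M)) phiE
    let lvec : Fin m → M := fun i =>
      (-((-1 : Rq) ^ wpar (wt i.castSucc))) • e i.castSucc +
        (qq ^ (-(wval (wt i.succ)))) • e i.succ
    let lprod : Finset (Fin m) → ExteriorAlgebra Rq M := fun I =>
      ((I.sort (· ≤ ·)).map fun i => ExteriorAlgebra.ι Rq (lvec i)).prod
    (∃ b : Module.Basis (Finset (Fin m)) Rq (LinearMap.ker E),
        ∀ I, (b I : ExteriorAlgebra Rq M) = lprod I) ∧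
      Module.finrank Rq (LinearMap.ker E) = 2 ^ m := by
  intro M e psumLt vsumGt phiE E lvec lprod
  have hq : (qq : Rq) ≠ 0 := RatFunc.X_ne_zero
  have hphi_e : ∀ j, phiE (e j) = (-1 : Rq) ^ psumLt j * qq ^ (-(vsumGt j)) := by
    intro j
    simp [phiE, e, M, Pi.single_apply]
  have hphi_l : ∀ i, phiE (lvec i) = 0 := by
    intro i
    simp only [lvec, map_add, map_smul, hphi_e, smul_eq_mul, psumLt, vsumGt,
      Fin.sum_filter_lt_succ, Fin.sum_filter_castSucc_lt_s6, neg_add, zpow_add₀ hq,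
      zpow_add₀ (by norm_num : (-1 : Rq) ≠ 0)]
    ring
  have hspan := top_le_span_range_cons_of_bidiagonal (Pi.basisFun Rq (Fin (m + 1))) (l := lvec)
    (fun i => -((-1 : Rq) ^ wpar (wt i.castSucc))) (fun i => qq ^ (-(wval (wt i.succ))))
    (fun i => zpow_ne_zero _ hq) (fun i => by simp [lvec, e])
  let u : Basis (Fin (m + 1)) Rq M := basisOfTopLeSpanOfCardEqFinrank _ hspan (by simp [M])
  obtain ⟨B, hB⟩ := exists_basis_ker_contractLeft_of_fin u (φ := phiE)
    (by
      simp only [u, coe_basisOfTopLeSpanOfCardEqFinrank, Fin.cons_zero, Pi.basisFun_apply]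
      exact (hphi_e 0).trans_ne (mul_ne_zero (zpow_ne_zero _ (by norm_num)) (zpow_ne_zero _ hq)))
    (fun i => by simpa [u] using hphi_l i)
  refine ⟨⟨B, fun I => ?_⟩, by rw [finrank_eq_card_basis B]; simp⟩
  simp only [hB, u, coe_basisOfTopLeSpanOfCardEqFinrank, Fin.cons_succ, List.map_map]
  rfl

end
end

section
/- The matrix identity [CT_1(e_{++})] · [CT_1(o_{++})] = (1-q^{-2})^4 · Id₃ holds, where [CT_1(e_{++})] = (1-q^{-2})² · [[-q, 1, 0], [0, q^{-1}, 0], [0, 1, -q]] and [CT_1(o_{++})] is determined by this relation; i.e., the weight-1 matrix of the positive crossing is invertible over C(q) with inverse (1-q^{-2})^{-4} times the weight-1 matrix of the negative crossing. -/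
/-! The weight-1 matrix of the negative crossing is that of the positive crossing with `q`
replaced by `q⁻¹`, and these two matrices are mutually inverse. Scaling each by `(1-q⁻²)²`
gives the identity up to the factor `(1-q⁻²)⁴`, which is nonzero because `q` is transcendental
over `ℂ`. -/

noncomputable section

theorem Transcendental.pow_ne_one {R A : Type*} [CommRing R] [Nontrivial R] [Ring A]
    [Algebra R A] {x : A} (hx : Transcendental R x) {n : ℕ} (hn : 0 < n) : x ^ n ≠ 1 :=
  fun h => hx.pow hn (h ▸ isAlgebraic_one)

theorem one_sub_qq_zpow_neg_two_ne_zero : 1 - qq ^ (-2 : ℤ) ≠ 0 := by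
  rw [zpow_neg, zpow_ofNat, sub_ne_zero, ne_comm, Ne, inv_eq_one]
  exact RatFunc.transcendental_X.pow_ne_one two_pos

section CrossingMatrix

variable {K : Type*} [DivisionRing K]

def crossingMatrix (q : K) : Matrix (Fin 3) (Fin 3) K :=
  !![-q, 1, 0; 0, q⁻¹, 0; 0, 1, -q]

theorem crossingMatrix_mul_crossingMatrix_inv {q : K} (hq : q ≠ 0) :
    crossingMatrix q * crossingMatrix q⁻¹ = 1 := by
  ext i j
  fin_cases i <;> fin_cases j <;>
    simp [crossingMatrix, Matrix.mul_apply, Fin.sum_univ_succ, mul_inv_cancel₀ hq,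
      inv_mul_cancel₀ hq]

theorem crossingMatrix_inv_mul_crossingMatrix {q : K} (hq : q ≠ 0) :
    crossingMatrix q⁻¹ * crossingMatrix q = 1 := by
  simpa using crossingMatrix_mul_crossingMatrix_inv (inv_ne_zero hq)

theorem isUnit_crossingMatrix {q : K} (hq : q ≠ 0) : IsUnit (crossingMatrix q) :=
  ⟨⟨crossingMatrix q, crossingMatrix q⁻¹, crossingMatrix_mul_crossingMatrix_inv hq,
    crossingMatrix_inv_mul_crossingMatrix hq⟩, rfl⟩

end CrossingMatrix

/-- The weight-1 matrix of the positive crossing bimodule,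
`[CT₁(e₊₊)] = (1-q⁻²)² · [[-q, 1, 0], [0, q⁻¹, 0], [0, 1, -q]]`, is invertible over
`ℂ(q)`, and there is a matrix `[CT₁(o₊₊)]` with
`[CT₁(e₊₊)] · [CT₁(o₊₊)] = (1-q⁻²)⁴ · Id₃ = [CT₁(o₊₊)] · [CT₁(e₊₊)]`; i.e. the
inverse of `[CT₁(e₊₊)]` is `(1-q⁻²)^{-4}` times the weight-1 matrix of the negative
crossing. -/
theorem stmt19 :
    let c : Rq := 1 - qq ^ (-2 : ℤ)
    let Me : Matrix (Fin 3) (Fin 3) Rq :=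
      c ^ 2 • !![-qq, 1, 0; 0, qq⁻¹, 0; 0, 1, -qq]
    IsUnit Me ∧
    ∃ Mo : Matrix (Fin 3) (Fin 3) Rq,
      Me * Mo = c ^ 4 • (1 : Matrix (Fin 3) (Fin 3) Rq) ∧
      Mo * Me = c ^ 4 • (1 : Matrix (Fin 3) (Fin 3) Rq) := by
  intro c Me
  have hq : qq ≠ 0 := RatFunc.X_ne_zero
  have hMe : Me = c ^ 2 • crossingMatrix qq := rfl
  have hc4 : c ^ 4 = c ^ 2 * c ^ 2 := by ring
  refine ⟨?_, c ^ 2 • crossingMatrix qq⁻¹, ?_, ?_⟩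
  · let u : Rqˣ := Units.mk0 c one_sub_qq_zpow_neg_two_ne_zero ^ 2
    have hu : (u : Rq) = c ^ 2 := by simp [u]
    rw [hMe, ← hu]
    exact (isUnit_crossingMatrix hq).smul u
  · rw [hMe, smul_mul_smul_comm, crossingMatrix_mul_crossingMatrix_inv hq, hc4]
  · rw [hMe, smul_mul_smul_comm, crossingMatrix_inv_mul_crossingMatrix hq, hc4]
end
end
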